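/- arXiv:2603.16632 — 3 statements merged into one kernel-verified Lean document; each statement's English description precedes it below -/
import Mathlib

section
/- (Complex S-procedure.) Let n be a positive natural number, let A₁, A₂ be Hermitian n×n complex matrices, b₁, b₂ ∈ ℂⁿ, and c₁, c₂ ∈ ℝ. For i = 1, 2 define the real-valued quadratic function hᵢ(x) = Re(xᴴ Aᵢ x) + 2·Re(bᵢᴴ x) + cᵢ for x ∈ ℂⁿ. Assume the Slater condition: there exists x₀ ∈ ℂⁿ with h₁(x₀) < 0. Then the following two statements are equivalent: (i) for every x ∈ ℂⁿ, h₁(x) ≤ 0 implies h₂(x) ≤ 0; (ii) there exists a real number α ≥ 0 such that the (n+1)×(n+1) Hermitian block matrix α·[[A₁, b₁],[b₁ᴴ, c₁]] − [[A₂, b₂],[b₂ᴴ, c₂]] is positive semidefinite. -/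
open Matrix ComplexOrder

/-- The real-valued quadratic function `h(x) = xᴴ A x + bᴴ x + xᴴ b + c
= Re(xᴴ A x) + 2·Re(bᴴ x) + c` associated with a Hermitian matrix `A`,
a vector `b`, and a real scalar `c`. -/
noncomputable def quadFun {n : ℕ} (A : Matrix (Fin n) (Fin n) ℂ) (b : Fin n → ℂ) (c : ℝ)
    (x : Fin n → ℂ) : ℝ :=
  (star x ⬝ᵥ A.mulVec x).re + 2 * (star b ⬝ᵥ x).re + c

/-- The Hermitian `(n+1)×(n+1)` block matrix `[[A, b], [bᴴ, c]]`. -/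
noncomputable def hermBlock {n : ℕ} (A : Matrix (Fin n) (Fin n) ℂ) (b : Fin n → ℂ) (c : ℝ) :
    Matrix (Fin n ⊕ Unit) (Fin n ⊕ Unit) ℂ :=
  Matrix.fromBlocks A (Matrix.replicateCol Unit b) (Matrix.replicateRow Unit (star b))
    (Matrix.of fun _ _ => (c : ℂ))

/-!
The values `B z z` of a sesquilinear form on a complex space are closed under addition (a
unimodular phase `ω` makes `B (x + ω • y) (x + ω • y)` a positive multiple of `B x x + B y y`) and
under nonnegative scaling, so they form a convex cone (Hausdorff–Toeplitz). For Hermitian `M₁, M₂`,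
`zᴴ (M₁ + i M₂) z` has real part `zᴴ M₁ z` and imaginary part `zᴴ M₂ z`, so the joint values of the
two forms form a convex cone in `ℂ`. Homogenizing `hᵢ` via `x ↦ (x, 1)`, condition (i) says that this
cone misses the open quadrant `{re < 0 < im}` (at points with last coordinate `0` by continuity
and density); a separating line through the origin, which the Slater
point keeps off the imaginary axis, is `im = α re`, and `α M₁ - M₂ ⪰ 0` says exactly that the cone
lies below it.
-/

open ComplexConjugate Complex Set

theorem Complex.exists_norm_eq_one_nonneg_mul_add_conj_mul (a b : ℂ) :
    ∃ ω : ℂ, ‖ω‖ = 1 ∧ 0 ≤ ω * a + conj ω * b := by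
  set d := a - conj b
  set ω := exp (↑(-arg d) * I)
  have hω : ‖ω‖ = 1 := norm_exp_ofReal_mul_I _
  have hωd : ω * d = ‖d‖ := by
    conv_lhs => rw [← norm_mul_exp_arg_mul_I d]
    rw [mul_left_comm, ← exp_add]
    simp
  have him : (ω * a + conj ω * b).im = 0 := by
    have : (ω * d).im = 0 := by rw [hωd]; simp
    simp only [d, mul_sub, sub_im, mul_im, conj_re, conj_im, add_im] at this ⊢
    linarith
  rcases le_total 0 (ω * a + conj ω * b).re with h | h
  · exact ⟨ω, hω, nonneg_iff.2 ⟨h, him.symm⟩⟩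
  · refine ⟨-ω, by rwa [norm_neg], ?_⟩
    rw [map_neg, neg_mul, neg_mul, ← neg_add, Left.nonneg_neg_iff]
    exact le_def.2 ⟨h, him⟩

namespace LinearMap

variable {E : Type*} [AddCommGroup E] [Module ℂ E] (B : E →ₗ⋆[ℂ] E →ₗ[ℂ] ℂ)

lemma apply_smul_smul_self (c : ℂ) (x : E) : B (c • x) (c • x) = conj c * c * B x x := by
  simp only [map_smulₛₗ, smul_apply, smul_eq_mul, RingHom.id_apply]
  ring

lemma ofReal_mul_apply_self {r : ℝ} (hr : 0 ≤ r) (x : E) :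
    (r : ℂ) * B x x = B ((√r : ℂ) • x) ((√r : ℂ) • x) := by
  rw [apply_smul_smul_self, conj_ofReal, ← ofReal_mul, Real.mul_self_sqrt hr]

lemma exists_apply_self_eq_add (x y : E) : ∃ z, B z z = B x x + B y y := by
  set w := B x x + B y y
  obtain hw | hw := eq_or_ne w 0
  · exact ⟨0, by simp [hw]⟩
  obtain ⟨ω, hω, hr⟩ :=
    Complex.exists_norm_eq_one_nonneg_mul_add_conj_mul (conj w * B x y) (conj w * B y x)
  set X := ω * B x y + conj ω * B y x
  have hexp : B (x + ω • y) (x + ω • y) = w + X := by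
    have hωω : conj ω * ω = 1 := by rw [conj_mul', hω]; simp
    simp only [map_add, map_smulₛₗ, add_apply, smul_apply, smul_eq_mul, w, X]
    linear_combination (B y y) * hωω
  -- `conj w * X ≥ 0` makes `X` a nonnegative multiple of `w`, so `w + X` is a positive one.
  replace hr : 0 ≤ conj w * X := by convert hr using 1; ring
  set r := (conj w * X).re
  have hr' : conj w * X = r := eq_re_of_ofReal_le (r := 0) (by rwa [ofReal_zero])
  have hk : 0 < ‖w‖ ^ 2 + r := add_pos_of_pos_of_nonneg (by positivity) (nonneg_iff.1 hr).1
  refine ⟨((√(‖w‖ ^ 2 / (‖w‖ ^ 2 + r)) : ℝ) : ℂ) • (x + ω • y), ?_⟩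
  rw [← ofReal_mul_apply_self _ (by positivity), hexp]
  have hne : ((‖w‖ ^ 2 + r : ℝ) : ℂ) ≠ 0 := by exact_mod_cast hk.ne'
  rw [ofReal_div, div_mul_eq_mul_div, div_eq_iff hne]
  push_cast
  linear_combination (-X) * mul_conj' w + w * hr'

def numericalRangeCone : PointedCone ℝ ℂ where
  carrier := Set.range fun x => B x x
  add_mem' := by
    rintro _ _ ⟨x, rfl⟩ ⟨y, rfl⟩
    exact B.exists_apply_self_eq_add x y
  zero_mem' := ⟨0, by simp⟩
  smul_mem' := by
    rintro ⟨r, hr⟩ _ ⟨x, rfl⟩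
    exact ⟨_, (B.ofReal_mul_apply_self hr x).symm.trans (by simp [Complex.real_smul])⟩

lemma mem_numericalRangeCone {w : ℂ} : w ∈ B.numericalRangeCone ↔ ∃ x, B x x = w := Iff.rfl

end LinearMap

theorem PointedCone.exists_strongDual_nonneg_of_disjoint_isOpen {E : Type*}
    [TopologicalSpace E] [AddCommGroup E] [Module ℝ E] [IsTopologicalAddGroup E]
    [ContinuousSMul ℝ E] (K : PointedCone ℝ E) {T : Set E} (hTc : Convex ℝ T) (hTo : IsOpen T)
    (hKT : Disjoint T K) :
    ∃ f : StrongDual ℝ E, (∀ x ∈ K, 0 ≤ f x) ∧ ∀ x ∈ T, f x < 0 := by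
  obtain ⟨f, u, hfT, hfK⟩ := geometric_hahn_banach_open hTc hTo K.convex hKT
  have hu : u ≤ 0 := by simpa using hfK 0 K.zero_mem
  refine ⟨f, fun x hx => ?_, fun x hx => (hfT x hx).trans_le hu⟩
  by_contra! hneg
  have hr : 0 ≤ (u - 1) / f x := div_nonneg_of_nonpos (by linarith) hneg.le
  have := hfK _ (K.smul_mem hr hx)
  rw [map_smul, smul_eq_mul, div_mul_cancel₀ _ hneg.ne] at this
  linarith

theorem PointedCone.exists_nonneg_im_le_mul_re (K : PointedCone ℝ ℂ)
    (hK : ∀ w ∈ K, w.re < 0 → w.im ≤ 0) (hslater : ∃ w ∈ K, w.re < 0) :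
    ∃ α : ℝ, 0 ≤ α ∧ ∀ w ∈ K, w.im ≤ α * w.re := by
  set T : Set ℂ := Iio 0 ×ℂ Ioi 0
  have hKT : Disjoint T K :=
    disjoint_left.2 fun w ⟨hre, him⟩ hw => (hK w hw hre).not_gt him
  obtain ⟨f, hfK, hfT⟩ := K.exists_strongDual_nonneg_of_disjoint_isOpen
    ((convex_halfSpace_re_lt 0).inter (convex_halfSpace_im_gt 0))
    (isOpen_Iio.reProdIm isOpen_Ioi) hKT
  have hf : ∀ w : ℂ, f w = w.re * f 1 + w.im * f I := fun w => by
    have hw : w = w.re • (1 : ℂ) + w.im • I := by simp [real_smul]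
    conv_lhs => rw [hw]
    rw [map_add, map_smul, map_smul, smul_eq_mul, smul_eq_mul]
  have hcl : closure T ⊆ {w | f w ≤ 0} :=
    closure_minimal (fun w hw => (hfT w hw).le) (isClosed_le f.continuous continuous_const)
  rw [closure_reProdIm, closure_Iio, closure_Ioi] at hcl
  have h1 : 0 ≤ f 1 := by
    simpa using hcl (show (-1 : ℂ) ∈ Iic 0 ×ℂ Ici 0 by simp [mem_reProdIm])
  have hI : f I ≤ 0 := hcl (show I ∈ Iic 0 ×ℂ Ici 0 by simp [mem_reProdIm])
  -- If `f I = 0`, then `f 1 > 0` because `-1 + I ∈ T`, and `f` is negative at the Slater point.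
  have hI' : f I < 0 := by
    refine hI.lt_of_ne fun h0 => ?_
    obtain ⟨w, hw, hwre⟩ := hslater
    have hT := hfT (-1 + I) (by simp)
    have hw := hfK w hw
    rw [hf] at hT hw
    simp only [add_re, neg_re, one_re, I_re, add_im, neg_im, one_im, I_im, h0] at hT hw
    nlinarith
  refine ⟨f 1 / -f I, div_nonneg h1 (by linarith), fun w hw => ?_⟩
  have := hfK w hw
  rw [hf] at this
  rw [div_mul_eq_mul_div, le_div_iff₀ (by linarith)]
  linarith

namespace Matrix

variable {m : Type*} [Fintype m]

lemma toLinearMapₛₗ₂'_starRingEnd_apply [DecidableEq m] (M : Matrix m m ℂ) (x y : m → ℂ) :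
    toLinearMapₛₗ₂' ℂ (starRingEnd ℂ) (RingHom.id ℂ) M x y = star x ⬝ᵥ M *ᵥ y := by
  simp only [toLinearMapₛₗ₂'_apply, dotProduct, mulVec, Finset.mul_sum, smul_eq_mul,
    RingHom.id_apply]
  exact Finset.sum_congr rfl fun _ _ => Finset.sum_congr rfl fun _ _ => by
    rw [starRingEnd_apply, Pi.star_apply]; ring

lemma re_im_star_dotProduct_add_I_smul_mulVec {M₁ M₂ : Matrix m m ℂ}
    (h₁ : M₁.IsHermitian) (h₂ : M₂.IsHermitian) (z : m → ℂ) :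
    (star z ⬝ᵥ (M₁ + I • M₂) *ᵥ z).re = (star z ⬝ᵥ M₁ *ᵥ z).re ∧
      (star z ⬝ᵥ (M₁ + I • M₂) *ᵥ z).im = (star z ⬝ᵥ M₂ *ᵥ z).re := by
  have := h₁.im_star_dotProduct_mulVec_self z
  have := h₂.im_star_dotProduct_mulVec_self z
  simp_all [add_mulVec, smul_mulVec, dotProduct_add]

lemma exists_nonneg_re_star_dotProduct_mulVec_le [DecidableEq m] {M₁ M₂ : Matrix m m ℂ}
    (h₁ : M₁.IsHermitian) (h₂ : M₂.IsHermitian)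
    (h : ∀ z, (star z ⬝ᵥ M₁ *ᵥ z).re < 0 → (star z ⬝ᵥ M₂ *ᵥ z).re ≤ 0)
    (hslater : ∃ z, (star z ⬝ᵥ M₁ *ᵥ z).re < 0) :
    ∃ α : ℝ, 0 ≤ α ∧ ∀ z, (star z ⬝ᵥ M₂ *ᵥ z).re ≤ α * (star z ⬝ᵥ M₁ *ᵥ z).re := by
  set K := (toLinearMapₛₗ₂' ℂ (starRingEnd ℂ) (RingHom.id ℂ) (M₁ + I • M₂)).numericalRangeCone
  have hzK : ∀ z, star z ⬝ᵥ (M₁ + I • M₂) *ᵥ z ∈ K :=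
    fun z => ⟨z, toLinearMapₛₗ₂'_starRingEnd_apply _ z z⟩
  have hK : ∀ w ∈ K, ∃ z, w.re = (star z ⬝ᵥ M₁ *ᵥ z).re ∧ w.im = (star z ⬝ᵥ M₂ *ᵥ z).re := by
    intro w hw
    obtain ⟨z, rfl⟩ := (LinearMap.mem_numericalRangeCone _).1 hw
    rw [toLinearMapₛₗ₂'_starRingEnd_apply]
    exact ⟨z, re_im_star_dotProduct_add_I_smul_mulVec h₁ h₂ z⟩
  obtain ⟨α, hα, hKα⟩ := K.exists_nonneg_im_le_mul_re
    (fun w hw hre => by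
      obtain ⟨z, hzre, hzim⟩ := hK w hw
      rw [hzre] at hre
      exact hzim ▸ h z hre)
    (by
      obtain ⟨z, hz⟩ := hslater
      exact ⟨_, hzK z, (re_im_star_dotProduct_add_I_smul_mulVec h₁ h₂ z).1 ▸ hz⟩)
  refine ⟨α, hα, fun z => ?_⟩
  simpa only [re_im_star_dotProduct_add_I_smul_mulVec h₁ h₂] using hKα _ (hzK z)

lemma posSemidef_smul_sub_iff {M₁ M₂ : Matrix m m ℂ} (h₁ : M₁.IsHermitian)
    (h₂ : M₂.IsHermitian) (α : ℝ) :
    (α • M₁ - M₂).PosSemidef ↔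
      ∀ z, (star z ⬝ᵥ M₂ *ᵥ z).re ≤ α * (star z ⬝ᵥ M₁ *ᵥ z).re := by
  have hH : (α • M₁ - M₂).IsHermitian := (h₁.smul (IsSelfAdjoint.all α)).sub h₂
  rw [posSemidef_iff_dotProduct_mulVec, and_iff_right hH]
  refine forall_congr' fun z => ?_
  have him : 0 = (star z ⬝ᵥ (α • M₁ - M₂) *ᵥ z).im := (hH.im_star_dotProduct_mulVec_self z).symm
  rw [nonneg_iff, and_iff_left him, ← sub_nonneg]
  simp [sub_mulVec, smul_mulVec, dotProduct_sub, Complex.real_smul]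

end Matrix

section HermBlock

variable {n : ℕ}

lemma isHermitian_hermBlock {A : Matrix (Fin n) (Fin n) ℂ} (hA : A.IsHermitian) (b : Fin n → ℂ)
    (c : ℝ) : (hermBlock A b c).IsHermitian :=
  hA.fromBlocks (by simp) (by ext; simp)

lemma re_star_dotProduct_hermBlock_mulVec_elim_one (A : Matrix (Fin n) (Fin n) ℂ)
    (b : Fin n → ℂ) (c : ℝ) (x : Fin n → ℂ) :
    (star (Sum.elim x 1) ⬝ᵥ hermBlock A b c *ᵥ Sum.elim x 1).re = quadFun A b c x := by
  have hcol : replicateCol Unit b *ᵥ 1 = b := by ext; simp [mulVec, dotProduct]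
  have hrow : (replicateRow Unit (star b) *ᵥ x) () = star b ⬝ᵥ x := rfl
  have hc : ((of fun _ _ => (c : ℂ)) *ᵥ (1 : Unit → ℂ)) () = c := by simp [mulVec, dotProduct]
  have h : (star x ⬝ᵥ b).re = (star b ⬝ᵥ x).re := by
    rw [star_dotProduct]; simp
  simp only [hermBlock, Function.star_sumElim, star_one, fromBlocks_mulVec,
    sumElim_dotProduct_sumElim, dotProduct_add, Sum.elim_comp_inl, Sum.elim_comp_inr, hcol,
    one_dotProduct, Fintype.sum_unique, hrow, hc, quadFun, add_re, ofReal_re, h]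
  ring

lemma re_star_dotProduct_hermBlock_mulVec_smul_elim_one (A : Matrix (Fin n) (Fin n) ℂ)
    (b : Fin n → ℂ) (c : ℝ) (t : ℂ) (x : Fin n → ℂ) :
    (star (t • Sum.elim x 1) ⬝ᵥ hermBlock A b c *ᵥ (t • Sum.elim x 1)).re =
      ‖t‖ ^ 2 * quadFun A b c x := by
  rw [← toLinearMapₛₗ₂'_starRingEnd_apply, LinearMap.apply_smul_smul_self,
    toLinearMapₛₗ₂'_starRingEnd_apply, conj_mul', ← re_star_dotProduct_hermBlock_mulVec_elim_one,
    ← ofReal_pow, re_ofReal_mul]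

lemma eq_smul_elim_one_of_ne_zero (z : Fin n ⊕ Unit → ℂ) (ht : z (.inr ()) ≠ 0) :
    z = z (.inr ()) • Sum.elim ((z (.inr ()))⁻¹ • (z ∘ .inl)) 1 := by
  ext (i | ⟨⟩) <;> simp [ht]

lemma re_star_dotProduct_hermBlock_mulVec_nonpos_of_neg {A₁ A₂ : Matrix (Fin n) (Fin n) ℂ}
    {b₁ b₂ : Fin n → ℂ} {c₁ c₂ : ℝ}
    (h : ∀ x, quadFun A₁ b₁ c₁ x ≤ 0 → quadFun A₂ b₂ c₂ x ≤ 0) (z : Fin n ⊕ Unit → ℂ)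
    (hz : (star z ⬝ᵥ hermBlock A₁ b₁ c₁ *ᵥ z).re < 0) :
    (star z ⬝ᵥ hermBlock A₂ b₂ c₂ *ᵥ z).re ≤ 0 := by
  set U := {z : Fin n ⊕ Unit → ℂ | (star z ⬝ᵥ hermBlock A₁ b₁ c₁ *ᵥ z).re < 0}
  set D := {z : Fin n ⊕ Unit → ℂ | z (.inr ()) ≠ 0}
  have hU : IsOpen U := isOpen_lt (by fun_prop) continuous_const
  have hD : Dense D := (dense_compl_singleton (0 : ℂ)).preimage (isOpenMap_eval (Sum.inr ()))
  have hUD : U ∩ D ⊆ {z | (star z ⬝ᵥ hermBlock A₂ b₂ c₂ *ᵥ z).re ≤ 0} := by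
    rintro z ⟨hz₁, ht⟩
    rw [eq_smul_elim_one_of_ne_zero z ht, mem_ofPred_eq,
      re_star_dotProduct_hermBlock_mulVec_smul_elim_one] at hz₁ ⊢
    exact mul_nonpos_of_nonneg_of_nonpos (by positivity)
      (h _ (nonpos_of_mul_nonpos_right hz₁.le (by positivity)))
  exact (hD.open_subset_closure_inter hU |>.trans
    (closure_minimal hUD (isClosed_le (by fun_prop) continuous_const))) hz

end HermBlock

theorem s_procedure_general {n : ℕ}
    (A₁ A₂ : Matrix (Fin n) (Fin n) ℂ) (hA₁ : A₁.IsHermitian) (hA₂ : A₂.IsHermitian)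
    (b₁ b₂ : Fin n → ℂ) (c₁ c₂ : ℝ)
    (slater : ∃ x₀ : Fin n → ℂ, quadFun A₁ b₁ c₁ x₀ < 0) :
    (∀ x : Fin n → ℂ, quadFun A₁ b₁ c₁ x ≤ 0 → quadFun A₂ b₂ c₂ x ≤ 0) ↔
      ∃ α : ℝ, 0 ≤ α ∧
        (α • hermBlock A₁ b₁ c₁ - hermBlock A₂ b₂ c₂).PosSemidef := by
  have hM₁ := isHermitian_hermBlock hA₁ b₁ c₁
  have hM₂ := isHermitian_hermBlock hA₂ b₂ c₂
  simp_rw [posSemidef_smul_sub_iff hM₁ hM₂]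
  constructor
  · intro h
    obtain ⟨x₀, hx₀⟩ := slater
    refine exists_nonneg_re_star_dotProduct_mulVec_le hM₁ hM₂
      (re_star_dotProduct_hermBlock_mulVec_nonpos_of_neg h) ⟨Sum.elim x₀ 1, ?_⟩
    rwa [re_star_dotProduct_hermBlock_mulVec_elim_one]
  · rintro ⟨α, hα, hle⟩ x hx
    have := hle (Sum.elim x 1)
    rw [re_star_dotProduct_hermBlock_mulVec_elim_one,
      re_star_dotProduct_hermBlock_mulVec_elim_one] at this
    linarith [mul_nonpos_of_nonneg_of_nonpos hα hx]

/-- Lemma 2 of the paper (complex S-procedure): under the Slater condition,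
`h₁(x) ≤ 0 ⟹ h₂(x) ≤ 0` for all `x` iff there exists `α ≥ 0` with
`α·[[A₁,b₁],[b₁ᴴ,c₁]] − [[A₂,b₂],[b₂ᴴ,c₂]] ⪰ 0`. -/
theorem s_procedure {n : ℕ} (hn : 0 < n)
    (A₁ A₂ : Matrix (Fin n) (Fin n) ℂ) (hA₁ : A₁.IsHermitian) (hA₂ : A₂.IsHermitian)
    (b₁ b₂ : Fin n → ℂ) (c₁ c₂ : ℝ)
    (slater : ∃ x₀ : Fin n → ℂ, quadFun A₁ b₁ c₁ x₀ < 0) :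
    (∀ x : Fin n → ℂ, quadFun A₁ b₁ c₁ x ≤ 0 → quadFun A₂ b₂ c₂ x ≤ 0) ↔
      ∃ α : ℝ, 0 ≤ α ∧
        (α • hermBlock A₁ b₁ c₁ - hermBlock A₂ b₂ c₂).PosSemidef :=
  s_procedure_general A₁ A₂ hA₁ hA₂ b₁ b₂ c₁ c₂ slater
end

section
/- Let n be a positive natural number, Q a Hermitian positive semidefinite n×n complex matrix, h̄ ∈ ℂⁿ, ε > 0 a real number, and T ∈ ℝ. Then the following are equivalent: (i) for every Δh ∈ ℂⁿ with ∑_i |Δh_i|² ≤ ε², one has Re((h̄ + Δh)ᴴ Q (h̄ + Δh)) ≥ T; (ii) there exists a real number α ≥ 0 such that the (n+1)×(n+1) Hermitian block matrix [[α·I + Q, Q h̄],[(Q h̄)ᴴ, −α·ε² + Re(h̄ᴴ Q h̄) − T]] is positive semidefinite. -/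
open Matrix ComplexOrder

/-!
Testing the block matrix on vectors `(v, t)` and rescaling to `t = 1` shows that it is positive
semidefinite iff the Lagrangian `L_α(Δ) = (h̄ + Δ)ᴴ Q (h̄ + Δ) + α ‖Δ‖²` is at least `T + α ε²`
everywhere; this gives (ii) ⇒ (i) at once. For (i) ⇒ (ii) with `T > 0` (for `T ≤ 0` take
`α = 0`), `L_α` is minimised at `Δ_α = -(α I + Q)⁻¹ Q h̄`, where `Q (h̄ + Δ_α) = -α Δ_α`.
The norm of `Δ_α` depends continuously on `α > 0`, is at most `‖Q h̄‖ / α`, and exceeds `ε`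
for small `α`: otherwise `Δ_α` would be feasible with value `≤ α ‖h̄‖² / 4 < T`. At an `α`
with `‖Δ_α‖ = ε` (intermediate value theorem) the minimiser is feasible, so
`min L_α = (h̄ + Δ_α)ᴴ Q (h̄ + Δ_α) + α ε² ≥ T + α ε²`.
-/

namespace Matrix

variable {ι : Type*}

lemma PosSemidef.posDef_smul_one_add [DecidableEq ι] {Q : Matrix ι ι ℂ} (hQ : Q.PosSemidef)
    {α : ℝ} (hα : 0 < α) : (α • (1 : Matrix ι ι ℂ) + Q).PosDef :=
  (PosDef.one.smul hα).add_posSemidef hQ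

variable [Fintype ι]

lemma re_star_dotProduct_self_nonneg (v : ι → ℂ) : 0 ≤ (star v ⬝ᵥ v).re :=
  (Complex.nonneg_iff.mp (dotProduct_star_self_nonneg v)).1

lemma IsHermitian.star_mulVec_dotProduct {Q : Matrix ι ι ℂ} (hQ : Q.IsHermitian) (v w : ι → ℂ) :
    star (Q *ᵥ v) ⬝ᵥ w = star v ⬝ᵥ Q *ᵥ w := by
  rw [star_mulVec, hQ.eq, dotProduct_mulVec]

lemma re_star_dotProduct_self (v : ι → ℂ) : (star v ⬝ᵥ v).re = ∑ i, ‖v i‖ ^ 2 := by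
  simp only [dotProduct, Complex.re_sum, Pi.star_apply, Complex.star_def,
    ← Complex.normSq_eq_norm_sq]
  refine Finset.sum_congr rfl fun i _ => ?_
  simp [Complex.normSq_apply, Complex.mul_re]

lemma IsHermitian.re_star_dotProduct_mulVec_comm {Q : Matrix ι ι ℂ} (hQ : Q.IsHermitian)
    (v w : ι → ℂ) : (star v ⬝ᵥ Q *ᵥ w).re = (star w ⬝ᵥ Q *ᵥ v).re := by
  rw [← Complex.conj_re, ← Complex.star_def, star_dotProduct, star_star, star_mulVec, hQ.eq,
    dotProduct_mulVec]

lemma IsHermitian.re_star_dotProduct_mulVec_add {Q : Matrix ι ι ℂ} (hQ : Q.IsHermitian)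
    (a w : ι → ℂ) :
    (star (a + w) ⬝ᵥ Q *ᵥ (a + w)).re =
      (star a ⬝ᵥ Q *ᵥ a).re + 2 * (star w ⬝ᵥ Q *ᵥ a).re + (star w ⬝ᵥ Q *ᵥ w).re := by
  simp only [star_add, mulVec_add, add_dotProduct, dotProduct_add, Complex.add_re,
    hQ.re_star_dotProduct_mulVec_comm a w]
  ring

lemma IsHermitian.posSemidef_iff_re {M : Matrix ι ι ℂ} (hM : M.IsHermitian) :
    M.PosSemidef ↔ ∀ x, 0 ≤ (star x ⬝ᵥ M *ᵥ x).re := by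
  simp only [posSemidef_iff_dotProduct_mulVec, hM, true_and, Complex.nonneg_iff]
  exact forall_congr' fun x => and_iff_left (hM.im_star_dotProduct_mulVec_self x).symm

lemma re_star_sumElim_dotProduct_fromBlocks_mulVec (P : Matrix ι ι ℂ) (b : ι → ℂ) (c : ℝ)
    (v : ι → ℂ) (t : ℂ) :
    (star (Sum.elim v fun _ : Unit => t) ⬝ᵥ
        fromBlocks P (replicateCol Unit b) (replicateRow Unit (star b)) (of fun _ _ => (c : ℂ)) *ᵥ
          Sum.elim v fun _ => t).re =
      (star v ⬝ᵥ P *ᵥ v).re + 2 * (t * (star v ⬝ᵥ b)).re + Complex.normSq t * c := by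
  have hstar : star (Sum.elim v fun _ : Unit => t) = Sum.elim (star v) fun _ => star t := by
    ext (i | i) <;> rfl
  have hcol : replicateCol Unit b *ᵥ (fun _ => t) = t • b := by
    ext i; simp [mulVec, dotProduct, mul_comm]
  have hrow : replicateRow Unit (star b) *ᵥ v = fun _ => star b ⬝ᵥ v := rfl
  have hc : (of fun _ _ : Unit => (c : ℂ)) *ᵥ (fun _ => t) = fun _ => c * t := by
    ext i; simp [mulVec, dotProduct]
  have hunit : (fun _ : Unit => star t) ⬝ᵥ ((fun _ => star b ⬝ᵥ v) + fun _ => c * t) =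
      star (t * (star v ⬝ᵥ b)) + star t * c * t := by
    simp [dotProduct, mul_add, mul_assoc, mul_comm]
  rw [hstar, fromBlocks_mulVec, sumElim_dotProduct_sumElim, Sum.elim_comp_inl, Sum.elim_comp_inr,
    hcol, hrow, hc, dotProduct_add, dotProduct_smul, smul_eq_mul, hunit]
  simp [Complex.mul_re, Complex.normSq_apply]
  ring

theorem PosSemidef.fromBlocks_replicateCol_iff {P : Matrix ι ι ℂ} (hP : P.PosSemidef)
    (b : ι → ℂ) (c : ℝ) :
    (fromBlocks P (replicateCol Unit b) (replicateRow Unit (star b))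
        (of fun _ _ => (c : ℂ))).PosSemidef ↔
      ∀ v, 0 ≤ (star v ⬝ᵥ P *ᵥ v).re + 2 * (star v ⬝ᵥ b).re + c := by
  have hM : (fromBlocks P (replicateCol Unit b) (replicateRow Unit (star b))
      (of fun _ _ => (c : ℂ))).IsHermitian := by
    rw [isHermitian_fromBlocks_iff]
    refine ⟨hP.1, conjTranspose_replicateCol b, ?_, ?_⟩
    · rw [conjTranspose_replicateRow, star_star]
    · ext; simp
  rw [hM.posSemidef_iff_re]
  refine ⟨fun h v => ?_, fun h x => ?_⟩
  · simpa [re_star_sumElim_dotProduct_fromBlocks_mulVec] using h (Sum.elim v fun _ => 1)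
  obtain ⟨v, t, rfl⟩ : ∃ v t, x = Sum.elim v fun _ : Unit => t :=
    ⟨x ∘ Sum.inl, x (Sum.inr ()), by ext (i | i) <;> rfl⟩
  rw [re_star_sumElim_dotProduct_fromBlocks_mulVec]
  rcases eq_or_ne t 0 with rfl | ht
  · simpa using hP.re_dotProduct_nonneg v
  -- the inhomogeneous inequality at `t⁻¹ • v`, rescaled by `|t|²`
  have hs : 0 < Complex.normSq t := Complex.normSq_pos.mpr ht
  have hconj : star t⁻¹ = ((Complex.normSq t)⁻¹ : ℝ) * t := by
    rw [Complex.inv_def, star_mul', Complex.star_def, Complex.conj_conj, Complex.conj_ofReal,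
      mul_comm]
  have hquad : (star (t⁻¹ • v) ⬝ᵥ P *ᵥ (t⁻¹ • v)).re =
      (Complex.normSq t)⁻¹ * (star v ⬝ᵥ P *ᵥ v).re := by
    rw [star_smul, mulVec_smul, smul_dotProduct, dotProduct_smul, smul_smul, smul_eq_mul, hconj]
    simp [ht]
  have hlin : (star (t⁻¹ • v) ⬝ᵥ b).re = (Complex.normSq t)⁻¹ * (t * (star v ⬝ᵥ b)).re := by
    rw [star_smul, smul_dotProduct, smul_eq_mul, hconj, mul_assoc, Complex.re_ofReal_mul]
  have := mul_nonneg hs.le (h (t⁻¹ • v))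
  rw [hquad, hlin] at this
  field_simp at this
  linarith

lemma neg_four_mul_re_star_add_dotProduct_le (a b : ι → ℂ) :
    -(4 * (star (a + b) ⬝ᵥ b).re) ≤ (star a ⬝ᵥ a).re := by
  simp only [dotProduct, Complex.re_sum, Finset.mul_sum, ← Finset.sum_neg_distrib]
  refine Finset.sum_le_sum fun i _ => ?_
  simp only [Pi.add_apply, Pi.star_apply, Complex.star_def, Complex.mul_re, Complex.conj_re,
    Complex.conj_im, Complex.add_re, Complex.add_im]
  nlinarith [sq_nonneg ((a i).re + 2 * (b i).re), sq_nonneg ((a i).im + 2 * (b i).im)]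

end Matrix

namespace RobustQuadratic

open Matrix

variable {ι : Type*} [Fintype ι]

def lagrangian (Q : Matrix ι ι ℂ) (h : ι → ℂ) (α : ℝ) (v : ι → ℂ) : ℝ :=
  (star (h + v) ⬝ᵥ Q *ᵥ (h + v)).re + α * (star v ⬝ᵥ v).re

lemma lagrangian_eq [DecidableEq ι] {Q : Matrix ι ι ℂ} (hQ : Q.IsHermitian) (α : ℝ)
    (h v : ι → ℂ) :
    lagrangian Q h α v = (star v ⬝ᵥ (α • (1 : Matrix ι ι ℂ) + Q) *ᵥ v).re +
      2 * (star v ⬝ᵥ Q *ᵥ h).re + (star h ⬝ᵥ Q *ᵥ h).re := by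
  rw [lagrangian, hQ.re_star_dotProduct_mulVec_add, add_mulVec, smul_mulVec, one_mulVec,
    dotProduct_add, dotProduct_smul, Complex.add_re, Complex.real_smul, Complex.re_ofReal_mul]
  ring

variable [DecidableEq ι] {Q : Matrix ι ι ℂ}

noncomputable def lagrangianMinimizer (Q : Matrix ι ι ℂ) (h : ι → ℂ) (α : ℝ) : ι → ℂ :=
  -((α • (1 : Matrix ι ι ℂ) + Q)⁻¹ *ᵥ (Q *ᵥ h))

lemma smul_one_add_mulVec_lagrangianMinimizer (hQ : Q.PosSemidef) (h : ι → ℂ) {α : ℝ}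
    (hα : 0 < α) : (α • (1 : Matrix ι ι ℂ) + Q) *ᵥ lagrangianMinimizer Q h α = -(Q *ᵥ h) := by
  have hdet := (isUnit_iff_isUnit_det _).mp (hQ.posDef_smul_one_add hα).isUnit
  rw [lagrangianMinimizer, mulVec_neg, mulVec_mulVec, mul_nonsing_inv _ hdet, one_mulVec]

lemma mulVec_add_lagrangianMinimizer (hQ : Q.PosSemidef) (h : ι → ℂ) {α : ℝ} (hα : 0 < α) :
    Q *ᵥ (h + lagrangianMinimizer Q h α) = -(α • lagrangianMinimizer Q h α) := by
  have := smul_one_add_mulVec_lagrangianMinimizer hQ h hα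
  rw [add_mulVec, smul_mulVec, one_mulVec] at this
  rw [mulVec_add, ← neg_eq_iff_eq_neg.mpr this]
  abel

lemma lagrangian_lagrangianMinimizer_le (hQ : Q.PosSemidef) (h : ι → ℂ) {α : ℝ}
    (hα : 0 < α) (v : ι → ℂ) :
    lagrangian Q h α (lagrangianMinimizer Q h α) ≤ lagrangian Q h α v := by
  unfold lagrangian
  have hd := mulVec_add_lagrangianMinimizer hQ h hα
  set d := lagrangianMinimizer Q h α
  obtain ⟨w, rfl⟩ : ∃ w, v = d + w := ⟨v - d, by abel⟩
  have hquad := hQ.1.re_star_dotProduct_mulVec_add (h + d) w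
  have hnorm := isHermitian_one.re_star_dotProduct_mulVec_add d w
  simp only [one_mulVec] at hnorm
  rw [← add_assoc, hquad, hnorm, hd]
  simp only [dotProduct_neg, dotProduct_smul, Complex.neg_re, Complex.real_smul,
    Complex.re_ofReal_mul]
  have hQw : 0 ≤ (star w ⬝ᵥ Q *ᵥ w).re := hQ.re_dotProduct_nonneg w
  nlinarith [mul_nonneg hα.le (re_star_dotProduct_self_nonneg w)]

lemma re_star_dotProduct_mulVec_add_lagrangianMinimizer_le (hQ : Q.PosSemidef) (h : ι → ℂ)
    {α : ℝ} (hα : 0 < α) :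
    (star (h + lagrangianMinimizer Q h α) ⬝ᵥ Q *ᵥ (h + lagrangianMinimizer Q h α)).re ≤
      α * (star h ⬝ᵥ h).re / 4 := by
  rw [mulVec_add_lagrangianMinimizer hQ h hα, dotProduct_neg, dotProduct_smul, Complex.neg_re,
    Complex.real_smul, Complex.re_ofReal_mul]
  nlinarith [neg_four_mul_re_star_add_dotProduct_le h (lagrangianMinimizer Q h α)]

lemma sq_mul_re_star_dotProduct_lagrangianMinimizer_le (hQ : Q.PosSemidef) (h : ι → ℂ) {α : ℝ}
    (hα : 0 < α) :
    α ^ 2 * (star (lagrangianMinimizer Q h α) ⬝ᵥ lagrangianMinimizer Q h α).re ≤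
      (star (Q *ᵥ h) ⬝ᵥ Q *ᵥ h).re := by
  have hd := smul_one_add_mulVec_lagrangianMinimizer hQ h hα
  set d := lagrangianMinimizer Q h α
  rw [add_mulVec, smul_mulVec, one_mulVec] at hd
  have hnorm := isHermitian_one.re_star_dotProduct_mulVec_add (α • d) (Q *ᵥ d)
  simp only [one_mulVec] at hnorm
  have hQh : (star (Q *ᵥ h) ⬝ᵥ Q *ᵥ h).re = (star (α • d + Q *ᵥ d) ⬝ᵥ (α • d + Q *ᵥ d)).re := by
    rw [hd, star_neg, neg_dotProduct_neg]
  rw [hQh, hnorm, hQ.1.star_mulVec_dotProduct, star_smul, star_trivial α]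
  simp only [mulVec_smul, smul_dotProduct, dotProduct_smul, Complex.real_smul,
    Complex.re_ofReal_mul]
  have hQd : 0 ≤ (star d ⬝ᵥ Q *ᵥ d).re := hQ.re_dotProduct_nonneg d
  nlinarith [mul_nonneg hα.le hQd, re_star_dotProduct_self_nonneg (Q *ᵥ d)]

lemma continuousAt_lagrangianMinimizer (hQ : Q.PosSemidef) (h : ι → ℂ) {α : ℝ} (hα : 0 < α) :
    ContinuousAt (lagrangianMinimizer Q h) α := by
  have hA : Continuous fun β : ℝ => β • (1 : Matrix ι ι ℂ) + Q := by fun_prop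
  have hinv : ContinuousAt Inv.inv (α • (1 : Matrix ι ι ℂ) + Q) := by
    refine continuousAt_matrix_inv _ ?_
    rw [Ring.inverse_eq_inv']
    exact continuousAt_inv₀ (hQ.posDef_smul_one_add hα).det_pos.ne'
  exact ((continuous_id.matrix_mulVec continuous_const).continuousAt.comp
    (hinv.comp (f := fun β : ℝ => β • (1 : Matrix ι ι ℂ) + Q) hA.continuousAt)).neg

theorem exists_re_star_dotProduct_lagrangianMinimizer_eq (hQ : Q.PosSemidef) (h : ι → ℂ)
    {ε T : ℝ} (hε : 0 < ε) (hT : 0 < T)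
    (hrob : ∀ Δ : ι → ℂ, (star Δ ⬝ᵥ Δ).re ≤ ε ^ 2 → T ≤ (star (h + Δ) ⬝ᵥ Q *ᵥ (h + Δ)).re) :
    ∃ α : ℝ, 0 < α ∧
      (star (lagrangianMinimizer Q h α) ⬝ᵥ lagrangianMinimizer Q h α).re = ε ^ 2 := by
  set φ : ℝ → ℝ := fun α => (star (lagrangianMinimizer Q h α) ⬝ᵥ lagrangianMinimizer Q h α).re
  have hh := re_star_dotProduct_self_nonneg h
  set α₀ := T / ((star h ⬝ᵥ h).re + 1)
  have hα₀ : 0 < α₀ := by positivity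
  have h₀ : ε ^ 2 < φ α₀ := by
    by_contra! hφ
    have := (hrob _ hφ).trans (re_star_dotProduct_mulVec_add_lagrangianMinimizer_le hQ h hα₀)
    have : α₀ * ((star h ⬝ᵥ h).re + 1) = T := div_mul_cancel₀ _ (by positivity)
    nlinarith
  set B := (star (Q *ᵥ h) ⬝ᵥ Q *ᵥ h).re
  set α₁ := α₀ + √B / ε
  have hα₀₁ : α₀ ≤ α₁ := le_add_of_nonneg_right (by positivity)
  have h₁ : φ α₁ ≤ ε ^ 2 := by
    have hα₁ : √B ≤ α₁ * ε := by
      rw [← div_le_iff₀ hε]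
      exact le_add_of_nonneg_left hα₀.le
    refine le_of_mul_le_mul_left ?_ (pow_pos (hα₀.trans_le hα₀₁) 2)
    calc α₁ ^ 2 * φ α₁ ≤ B :=
          sq_mul_re_star_dotProduct_lagrangianMinimizer_le hQ h (hα₀.trans_le hα₀₁)
      _ ≤ (α₁ * ε) ^ 2 := (Real.sqrt_le_iff.mp hα₁).2
      _ = α₁ ^ 2 * ε ^ 2 := mul_pow α₁ ε 2
  have hφ : ContinuousOn φ (Set.Icc α₀ α₁) := fun β hβ =>
    ((Complex.continuous_re.comp (continuous_star.dotProduct continuous_id)).continuousAt.comp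
      (continuousAt_lagrangianMinimizer hQ h (hα₀.trans_le hβ.1))).continuousWithinAt
  obtain ⟨α, hα, hφα⟩ := intermediate_value_Icc' hα₀₁ hφ ⟨h₁, h₀.le⟩
  exact ⟨α, hα₀.trans_le hα.1, hφα⟩

theorem exists_lagrange_multiplier (hQ : Q.PosSemidef) (h : ι → ℂ) {ε T : ℝ} (hε : 0 < ε)
    (hrob : ∀ Δ : ι → ℂ, (star Δ ⬝ᵥ Δ).re ≤ ε ^ 2 → T ≤ (star (h + Δ) ⬝ᵥ Q *ᵥ (h + Δ)).re) :
    ∃ α : ℝ, 0 ≤ α ∧ ∀ v : ι → ℂ, T + α * ε ^ 2 ≤ lagrangian Q h α v := by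
  rcases le_or_gt T 0 with hT | hT
  · refine ⟨0, le_rfl, fun v => ?_⟩
    have : 0 ≤ (star (h + v) ⬝ᵥ Q *ᵥ (h + v)).re := hQ.re_dotProduct_nonneg (h + v)
    simpa [lagrangian] using hT.trans this
  obtain ⟨α, hα, hd⟩ := exists_re_star_dotProduct_lagrangianMinimizer_eq hQ h hε hT hrob
  refine ⟨α, hα.le, fun v => ?_⟩
  calc T + α * ε ^ 2 ≤ lagrangian Q h α (lagrangianMinimizer Q h α) := by
        rw [lagrangian, hd]
        exact add_le_add_left (hrob _ hd.le) _
    _ ≤ lagrangian Q h α v := lagrangian_lagrangianMinimizer_le hQ h hα v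

theorem posSemidef_fromBlocks_iff_forall_le_lagrangian (hQ : Q.PosSemidef) (h : ι → ℂ)
    (ε T : ℝ) {α : ℝ} (hα : 0 ≤ α) :
    (fromBlocks (α • (1 : Matrix ι ι ℂ) + Q) (replicateCol Unit (Q *ᵥ h))
        (replicateRow Unit (star (Q *ᵥ h)))
        (of fun _ _ => ((-α * ε ^ 2 + (star h ⬝ᵥ Q *ᵥ h).re - T : ℝ) : ℂ))).PosSemidef ↔
      ∀ v, T + α * ε ^ 2 ≤ lagrangian Q h α v := by
  rw [((PosSemidef.one.smul hα).add hQ).fromBlocks_replicateCol_iff]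
  refine forall_congr' fun v => ?_
  rw [lagrangian_eq hQ.1]
  constructor <;> intro <;> linarith

end RobustQuadratic

open RobustQuadratic in
theorem robust_snr_lmi_general
    {n : ℕ} (Q : Matrix (Fin n) (Fin n) ℂ) (hQ : Q.PosSemidef)
    (hbar : Fin n → ℂ) (ε : ℝ) (hε : 0 < ε) (T : ℝ) :
    (∀ Δh : Fin n → ℂ, ∑ i, ‖Δh i‖ ^ 2 ≤ ε ^ 2 →
        T ≤ (star (hbar + Δh) ⬝ᵥ Q.mulVec (hbar + Δh)).re) ↔
      ∃ α : ℝ, 0 ≤ α ∧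
        (Matrix.fromBlocks (α • (1 : Matrix (Fin n) (Fin n) ℂ) + Q)
          (Matrix.replicateCol Unit (Q.mulVec hbar))
          (Matrix.replicateRow Unit (star (Q.mulVec hbar)))
          (Matrix.of fun _ _ =>
            ((-α * ε ^ 2 + (star hbar ⬝ᵥ Q.mulVec hbar).re - T : ℝ) : ℂ))).PosSemidef := by
  refine ⟨fun hrob => ?_, fun ⟨α, hα, hM⟩ Δh hΔh => ?_⟩
  · obtain ⟨α, hα, hL⟩ := exists_lagrange_multiplier hQ hbar hε fun Δh hΔh =>
      hrob Δh (by rwa [← re_star_dotProduct_self])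
    exact ⟨α, hα, (posSemidef_fromBlocks_iff_forall_le_lagrangian hQ hbar ε T hα).2 hL⟩
  · have hL := (posSemidef_fromBlocks_iff_forall_le_lagrangian hQ hbar ε T hα).1 hM Δh
    rw [lagrangian, re_star_dotProduct_self] at hL
    nlinarith [mul_le_mul_of_nonneg_left hΔh hα]

/-- LMI reformulation of the robust communication-SNR constraint in Proposition 2 of the
paper (via the S-procedure): for a Hermitian PSD matrix `Q`, estimated channel `h̄`,
error radius `ε > 0`, and threshold `T`, the robust constraint
`(h̄+Δh)ᴴ Q (h̄+Δh) ≥ T` for all `‖Δh‖₂² ≤ ε²` holds iff there is `α ≥ 0` such that the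
block matrix `[[α·I + Q, Q h̄],[(Q h̄)ᴴ, −α·ε² + Re(h̄ᴴ Q h̄) − T]]` is PSD. -/
theorem robust_snr_lmi
    {n : ℕ} (hn : 0 < n) (Q : Matrix (Fin n) (Fin n) ℂ) (hQ : Q.PosSemidef)
    (hbar : Fin n → ℂ) (ε : ℝ) (hε : 0 < ε) (T : ℝ) :
    (∀ Δh : Fin n → ℂ, ∑ i, ‖Δh i‖ ^ 2 ≤ ε ^ 2 →
        T ≤ (star (hbar + Δh) ⬝ᵥ Q.mulVec (hbar + Δh)).re) ↔
      ∃ α : ℝ, 0 ≤ α ∧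
        (Matrix.fromBlocks (α • (1 : Matrix (Fin n) (Fin n) ℂ) + Q)
          (Matrix.replicateCol Unit (Q.mulVec hbar))
          (Matrix.replicateRow Unit (star (Q.mulVec hbar)))
          (Matrix.of fun _ _ =>
            ((-α * ε ^ 2 + (star hbar ⬝ᵥ Q.mulVec hbar).re - T : ℝ) : ℂ))).PosSemidef :=
  robust_snr_lmi_general Q hQ hbar ε hε T
end

section
/- Let n be a positive natural number, Q a Hermitian positive semidefinite n×n complex matrix, a, ã ∈ ℂⁿ, ε > 0 a real number, and z ∈ ℝ. Then the following are equivalent: (i) for every δ ∈ ℂ with |δ| ≤ ε, one has Re((a + δ·ã)ᴴ Q (a + δ·ã)) ≥ z; (ii) there exists a real number ξ ≥ 0 such that the 2×2 Hermitian matrix [[ξ + ãᴴ Q ã, ãᴴ Q a],[aᴴ Q ã, −ξ·ε² + Re(aᴴ Q a) − z]] is positive semidefinite. -/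
/-!
With `A = ãᴴQã ≥ 0`, `B = ãᴴQa` and `c = Re(aᴴQa)` one has
`Re((a + δã)ᴴQ(a + δã)) = c + 2 Re(δ̄ B) + |δ|² A`. On the circle `|δ| = r` its minimum is
`c - 2r|B| + r²A` (take `δ` antiparallel to `B`), so the robust constraint is a quadratic
inequality in `r ∈ [0, ε]`. Since `[[p, B], [B̄, q]]` is PSD iff `p, q ≥ 0` and `|B|² ≤ pq`,
the LMI gives by AM-GM `2r|B| ≤ (ξ + A) r² + (c - z - ξε²)`, which together with
`ξ (ε² - r²) ≥ 0` gives the constraint. Conversely the multiplier is explicit: `ξ = 0` if the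
unconstrained minimiser `r = |B| / A` lies in `[0, ε]`, and otherwise `ξ = (c - z - ε|B|) / ε²`,
which makes the LMI tight at the active boundary `r = ε`.
-/

open Matrix ComplexOrder

lemma two_mul_mul_mul_le_of_sq_le_mul {p q b : ℝ} (hp : 0 ≤ p) (hq : 0 ≤ q)
    (h : b ^ 2 ≤ p * q) (u v : ℝ) : 2 * (u * v * b) ≤ p * u ^ 2 + q * v ^ 2 := by
  refine le_of_abs_le (abs_le_of_sq_le_sq ?_ (by positivity))
  calc (2 * (u * v * b)) ^ 2 = 4 * (u ^ 2 * v ^ 2) * b ^ 2 := by ring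
    _ ≤ 4 * (u ^ 2 * v ^ 2) * (p * q) := by gcongr
    _ ≤ (p * u ^ 2 + q * v ^ 2) ^ 2 := by nlinarith [sq_nonneg (p * u ^ 2 - q * v ^ 2)]

lemma Matrix.IsHermitian.star_dotProduct_mulVec_comm {ι : Type*} [Fintype ι]
    {Q : Matrix ι ι ℂ} (hQ : Q.IsHermitian) (a b : ι → ℂ) :
    star a ⬝ᵥ Q *ᵥ b = star (star b ⬝ᵥ Q *ᵥ a) := by
  rw [star_dotProduct, star_mulVec, ← dotProduct_mulVec, hQ.eq]

lemma Matrix.IsHermitian.re_star_add_smul_dotProduct_mulVec {ι : Type*} [Fintype ι]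
    {Q : Matrix ι ι ℂ} (hQ : Q.IsHermitian) (a b : ι → ℂ) (δ : ℂ) :
    (star (a + δ • b) ⬝ᵥ Q *ᵥ (a + δ • b)).re =
      (star a ⬝ᵥ Q *ᵥ a).re + 2 * (star δ * (star b ⬝ᵥ Q *ᵥ a)).re
        + ‖δ‖ ^ 2 * (star b ⬝ᵥ Q *ᵥ b).re := by
  have hexp : star (a + δ • b) ⬝ᵥ Q *ᵥ (a + δ • b) = star a ⬝ᵥ Q *ᵥ a
      + star (star δ * (star b ⬝ᵥ Q *ᵥ a)) + star δ * (star b ⬝ᵥ Q *ᵥ a)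
      + (star δ * δ) * (star b ⬝ᵥ Q *ᵥ b) := by
    simp only [star_add, star_smul, mulVec_add, mulVec_smul, dotProduct_add, add_dotProduct,
      smul_dotProduct, dotProduct_smul, smul_eq_mul, star_mul, star_star,
      hQ.star_dotProduct_mulVec_comm a b]
    ring
  rw [hexp, Complex.star_def, Complex.conj_mul']
  simp only [Complex.add_re, Complex.conj_re, ← Complex.ofReal_pow, Complex.re_ofReal_mul]
  ring

lemma Complex.neg_norm_mul_norm_le_re_star_mul (δ B : ℂ) : -(‖δ‖ * ‖B‖) ≤ (star δ * B).re := by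
  have := Complex.abs_re_le_norm (star δ * B)
  rw [norm_mul, norm_star] at this
  exact neg_le_of_abs_le this

lemma Complex.exists_norm_eq_re_star_mul_eq {r : ℝ} (hr : 0 ≤ r) (B : ℂ) :
    ∃ δ : ℂ, ‖δ‖ = r ∧ (star δ * B).re = -(r * ‖B‖) := by
  refine ⟨-r * exp (B.arg * I), by simp [abs_of_nonneg hr], ?_⟩
  have hunit : star (exp (B.arg * I)) * exp (B.arg * I) = 1 := by
    rw [star_def, ← exp_conj, map_mul, conj_ofReal, conj_I, ← exp_add]
    simp
  calc (star (-r * exp (B.arg * I)) * B).re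
      = (((-(r * ‖B‖) : ℝ) : ℂ) * (star (exp (B.arg * I)) * exp (B.arg * I))).re := by
        nth_rewrite 2 [← norm_mul_exp_arg_mul_I B]
        simp only [star_mul', star_neg, Complex.star_def, conj_ofReal]
        push_cast
        ring_nf
    _ = -(r * ‖B‖) := by rw [hunit, mul_one, ofReal_re]

lemma forall_norm_le_iff_forall_radius {A c z ε : ℝ} {B : ℂ} :
    (∀ δ : ℂ, ‖δ‖ ≤ ε → z ≤ c + 2 * (star δ * B).re + ‖δ‖ ^ 2 * A) ↔
      ∀ r : ℝ, 0 ≤ r → r ≤ ε → z ≤ c - 2 * (r * ‖B‖) + r ^ 2 * A := by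
  constructor
  · intro h r hr hrε
    obtain ⟨δ, hδr, hδB⟩ := Complex.exists_norm_eq_re_star_mul_eq hr B
    have := h δ (hδr ▸ hrε)
    rw [hδr, hδB] at this
    linarith
  · intro h δ hδ
    linarith [h ‖δ‖ (norm_nonneg δ) hδ, Complex.neg_norm_mul_norm_le_re_star_mul δ B]

lemma exists_multiplier_of_forall_le_quadratic {A b c z ε : ℝ} (hA : 0 ≤ A) (hb : 0 ≤ b)
    (hε : 0 < ε) (h : ∀ r : ℝ, 0 ≤ r → r ≤ ε → z ≤ c - 2 * (r * b) + r ^ 2 * A) :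
    ∃ ξ : ℝ, 0 ≤ ξ ∧ 0 ≤ -ξ * ε ^ 2 + c - z ∧ b ^ 2 ≤ (ξ + A) * (-ξ * ε ^ 2 + c - z) := by
  have hc : z ≤ c := by simpa using h 0 le_rfl hε.le
  rcases le_or_gt b (ε * A) with hbA | hbA
  · refine ⟨0, le_rfl, by linarith, ?_⟩
    rcases hA.eq_or_lt with rfl | hApos
    · have hb0 : b = 0 := by nlinarith
      simp [hb0]
    · have hmin := h (b / A) (by positivity) ((div_le_iff₀ hApos).2 hbA)
      have hval : c - 2 * (b / A * b) + (b / A) ^ 2 * A = c - b ^ 2 / A := by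
        field_simp; ring
      rw [hval] at hmin
      have := (div_le_iff₀ hApos).1 (show b ^ 2 / A ≤ c - z by linarith)
      linarith
  · have hbd := h ε hε.le le_rfl
    set ξ := (c - z - ε * b) / ε ^ 2
    have hξ : ξ * ε ^ 2 = c - z - ε * b := div_mul_cancel₀ _ (by positivity)
    have hq : -ξ * ε ^ 2 + c - z = ε * b := by linarith
    refine ⟨ξ, div_nonneg (by nlinarith) (by positivity), by rw [hq]; positivity, ?_⟩
    rw [hq]
    have : b ≤ (ξ + A) * ε := by nlinarith
    nlinarith

lemma forall_le_quadratic_of_multiplier {A b c z ε ξ : ℝ} (hA : 0 ≤ A) (hξ : 0 ≤ ξ)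
    (hq : 0 ≤ -ξ * ε ^ 2 + c - z) (hpq : b ^ 2 ≤ (ξ + A) * (-ξ * ε ^ 2 + c - z))
    (r : ℝ) (hr : 0 ≤ r) (hrε : r ≤ ε) : z ≤ c - 2 * (r * b) + r ^ 2 * A := by
  have hcs := two_mul_mul_mul_le_of_sq_le_mul (by positivity) hq hpq r 1
  have : ξ * r ^ 2 ≤ ξ * ε ^ 2 := by gcongr
  linarith

lemma star_dotProduct_fin_two_mulVec (p q : ℝ) (B : ℂ) (x : Fin 2 → ℂ) :
    star x ⬝ᵥ !![(p : ℂ), B; star B, (q : ℂ)] *ᵥ x =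
      ((p * ‖x 0‖ ^ 2 + q * ‖x 1‖ ^ 2 + 2 * (star (x 0) * (B * x 1)).re : ℝ) : ℂ) := by
  have hw : star (x 1) * (star B * x 0) = star (star (x 0) * (B * x 1)) := by
    simp only [star_mul, star_star]; ring
  simp only [dotProduct, mulVec, Fin.sum_univ_two, Pi.star_apply, of_apply, cons_val',
    cons_val_zero, cons_val_one, empty_val', cons_val_fin_one]
  rw [show star (x 0) * ((p : ℂ) * x 0 + B * x 1) + star (x 1) * (star B * x 0 + (q : ℂ) * x 1)
      = p * (star (x 0) * x 0) + q * (star (x 1) * x 1)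
        + (star (x 0) * (B * x 1) + star (x 1) * (star B * x 0)) by ring,
    hw, Complex.star_def, Complex.conj_mul', Complex.conj_mul',
    Complex.add_conj]
  push_cast
  ring

lemma posSemidef_fin_two_iff {p q : ℝ} {B : ℂ} :
    (!![(p : ℂ), B; star B, (q : ℂ)]).PosSemidef ↔ 0 ≤ p ∧ 0 ≤ q ∧ ‖B‖ ^ 2 ≤ p * q := by
  constructor
  · intro hM
    have hp := hM.diag_nonneg (i := 0)
    have hq := hM.diag_nonneg (i := 1)
    have hdet := hM.det_nonneg
    rw [det_fin_two_of, Complex.star_def, Complex.mul_conj', ← Complex.ofReal_mul,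
      ← Complex.ofReal_pow, ← Complex.ofReal_sub] at hdet
    simp only [of_apply, cons_val', cons_val_zero, cons_val_one, empty_val', cons_val_fin_one,
      Complex.zero_le_real] at hp hq hdet
    exact ⟨hp, hq, by linarith⟩
  · rintro ⟨hp, hq, hpq⟩
    refine PosSemidef.of_dotProduct_mulVec_nonneg ?_ fun x ↦ ?_
    · ext i j
      fin_cases i <;> fin_cases j <;> simp [conjTranspose_apply]
    · rw [star_dotProduct_fin_two_mulVec, Complex.zero_le_real]
      have hcs := two_mul_mul_mul_le_of_sq_le_mul hp hq hpq ‖x 0‖ ‖x 1‖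
      have hre := Complex.neg_norm_mul_norm_le_re_star_mul (x 0) (B * x 1)
      rw [norm_mul] at hre
      linarith

theorem robust_aod_lmi_general
    {n : ℕ} (Q : Matrix (Fin n) (Fin n) ℂ) (hQ : Q.PosSemidef)
    (a aTil : Fin n → ℂ) (ε : ℝ) (hε : 0 < ε) (z : ℝ) :
    (∀ δ : ℂ, ‖δ‖ ≤ ε →
        z ≤ (star (a + δ • aTil) ⬝ᵥ Q.mulVec (a + δ • aTil)).re) ↔
      ∃ ξ : ℝ, 0 ≤ ξ ∧
        (!![(ξ : ℂ) + star aTil ⬝ᵥ Q.mulVec aTil, star aTil ⬝ᵥ Q.mulVec a;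
            star a ⬝ᵥ Q.mulVec aTil,
            ((-ξ * ε ^ 2 + (star a ⬝ᵥ Q.mulVec a).re - z : ℝ) : ℂ)]).PosSemidef := by
  obtain ⟨A, hA, hAeq⟩ : ∃ A : ℝ, 0 ≤ A ∧ (A : ℂ) = star aTil ⬝ᵥ Q *ᵥ aTil :=
    ⟨_, hQ.re_dotProduct_nonneg aTil,
      (Complex.eq_re_of_ofReal_le (r := 0) (by simpa using hQ.dotProduct_mulVec_nonneg aTil)).symm⟩
  simp_rw [hQ.isHermitian.re_star_add_smul_dotProduct_mulVec,
    hQ.isHermitian.star_dotProduct_mulVec_comm a aTil, ← hAeq, Complex.ofReal_re,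
    ← Complex.ofReal_add, forall_norm_le_iff_forall_radius, posSemidef_fin_two_iff]
  constructor
  · intro h
    obtain ⟨ξ, hξ, hq, hpq⟩ := exists_multiplier_of_forall_le_quadratic hA (norm_nonneg _) hε h
    exact ⟨ξ, hξ, by positivity, hq, hpq⟩
  · rintro ⟨ξ, hξ, -, hq, hpq⟩
    exact forall_le_quadratic_of_multiplier hA hξ hq hpq

/-- LMI reformulation of the robust sensing-numerator constraint in Proposition 7 of the
paper (via the S-procedure): for a Hermitian PSD matrix `Q`, vectors `a, ã`, error
radius `ε > 0`, and level `z`, the robust constraint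
`(a + δ·ã)ᴴ Q (a + δ·ã) ≥ z` for all `|δ| ≤ ε` holds iff there exists `ξ ≥ 0` such that
the 2×2 Hermitian matrix `[[ξ + ãᴴQã, ãᴴQa],[aᴴQã, −ξ·ε² + Re(aᴴQa) − z]]` is PSD. -/
theorem robust_aod_lmi
    {n : ℕ} (hn : 0 < n) (Q : Matrix (Fin n) (Fin n) ℂ) (hQ : Q.PosSemidef)
    (a aTil : Fin n → ℂ) (ε : ℝ) (hε : 0 < ε) (z : ℝ) :
    (∀ δ : ℂ, ‖δ‖ ≤ ε →
        z ≤ (star (a + δ • aTil) ⬝ᵥ Q.mulVec (a + δ • aTil)).re) ↔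
      ∃ ξ : ℝ, 0 ≤ ξ ∧
        (!![(ξ : ℂ) + star aTil ⬝ᵥ Q.mulVec aTil, star aTil ⬝ᵥ Q.mulVec a;
            star a ⬝ᵥ Q.mulVec aTil,
            ((-ξ * ε ^ 2 + (star a ⬝ᵥ Q.mulVec a).re - z : ℝ) : ℂ)]).PosSemidef :=
  robust_aod_lmi_general Q hQ a aTil ε hε z
end
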